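/- Let G be a finite connected simple graph on vertex set V with N = |V| ≥ 3 vertices, and consider the taxi drive on G with uniformly random destinations (β = 0): starting from a fixed vertex t_0, let t_1, t_2, … be i.i.d. uniform on V, and for each k let trip k traverse an independently and uniformly chosen shortest path from t_{k-1} to t_k, spending one time unit on each vertex of that path except its origin (a trip with t_{k-1} = t_k takes zero time). Then almost surely, for every vertex i, the fraction of time units spent at vertex i during the first n trips converges, as n → ∞, to b_i' / Σ_{j∈V} b_j'. That is, the stationary density of the taxi drive at each vertex equals its normalized adjusted betweenness. -/

import Mathlib

open SimpleGraph Finset MeasureTheory ProbabilityTheory Filter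

/-- The number `σ_{st}` of shortest paths (walks of length `G.dist s t`) from `s` to `t`. -/
noncomputable def numSP {V : Type*} [Fintype V] [DecidableEq V] (G : SimpleGraph V)
    [DecidableRel G.Adj] (s t : V) : ℕ :=
  (G.finsetWalkLength (G.dist s t) s t).card

/-- The number `σ_{st}(i)` of shortest paths from `s` to `t` that contain the vertex `i`. -/
noncomputable def numSPthrough {V : Type*} [Fintype V] [DecidableEq V] (G : SimpleGraph V)
    [DecidableRel G.Adj] (i s t : V) : ℕ :=
  ((G.finsetWalkLength (G.dist s t) s t).filter (fun w => i ∈ w.support)).card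

/-- The adjusted betweenness
`b_i' = (1/((N-1)(N-2))) Σ_{(s,t) : s ≠ t, s ≠ i} σ_{st}(i)/σ_{st}`. -/
noncomputable def adjBetweenness {V : Type*} [Fintype V] [DecidableEq V] (G : SimpleGraph V)
    [DecidableRel G.Adj] (i : V) : ℝ :=
  (1 / (((Fintype.card V : ℝ) - 1) * ((Fintype.card V : ℝ) - 2))) *
    ∑ s : V, ∑ t : V,
      if s ≠ t ∧ s ≠ i then (numSPthrough G i s t : ℝ) / (numSP G s t : ℝ) else 0

/-- The randomness used by the taxi drive in a single trip: a (uniformly random) destination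
vertex together with a table assigning to each ordered pair `(s,t)` of vertices a (uniformly
random) shortest path from `s` to `t`.  Choosing this datum uniformly at random means exactly
that the destination is uniform on `V` and that, independently, for each pair `(s,t)` a
shortest path is chosen uniformly at random among the `σ_{st}` shortest paths. -/
abbrev TaxiStep {V : Type*} [Fintype V] [DecidableEq V] (G : SimpleGraph V)
    [DecidableRel G.Adj] : Type _ :=
  V × ∀ s t : V, ↥(G.finsetWalkLength (G.dist s t) s t)

/-- The sequence of trip endpoints of the taxi drive: `taxiDest G t₀ X 0 = t₀` is the fixed
starting vertex, and for `k ≥ 1` the destination of the `k`-th trip is the (random) vertex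
drawn at step `k`. -/
def taxiDest {V : Type*} [Fintype V] [DecidableEq V] {G : SimpleGraph V} [DecidableRel G.Adj]
    {Ω : Type*} (t₀ : V) (X : ℕ → Ω → TaxiStep G) : ℕ → Ω → V
  | 0 => fun _ => t₀
  | k + 1 => fun ω => (X (k + 1) ω).1

/-- The shortest path traversed during the `k`-th trip (`k ≥ 1`) of the taxi drive: the
uniformly chosen shortest path from the previous destination `t_{k-1}` to the new
destination `t_k`. -/
noncomputable def taxiTrip {V : Type*} [Fintype V] [DecidableEq V] {G : SimpleGraph V}
    [DecidableRel G.Adj] {Ω : Type*} (t₀ : V) (X : ℕ → Ω → TaxiStep G) (k : ℕ) (ω : Ω) :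
    G.Walk (taxiDest t₀ X (k - 1) ω) (taxiDest t₀ X k ω) :=
  ((X k ω).2 (taxiDest t₀ X (k - 1) ω) (taxiDest t₀ X k ω)).val

/-- The number of time units the taxi spends at vertex `i` during its `k`-th trip: the taxi
visits every vertex of the traversed shortest path except the origin of the trip, each for one
time unit (so a trip whose destination equals its origin takes zero time). -/
noncomputable def taxiVisits {V : Type*} [Fintype V] [DecidableEq V] {G : SimpleGraph V}
    [DecidableRel G.Adj] {Ω : Type*} (t₀ : V) (X : ℕ → Ω → TaxiStep G) (i : V) (k : ℕ)
    (ω : Ω) : ℕ :=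
  (taxiTrip t₀ X k ω).support.tail.count i

/-- The duration (number of time units) of the `k`-th trip of the taxi drive. -/
noncomputable def taxiTripTime {V : Type*} [Fintype V] [DecidableEq V] {G : SimpleGraph V}
    [DecidableRel G.Adj] {Ω : Type*} (t₀ : V) (X : ℕ → Ω → TaxiStep G) (k : ℕ) (ω : Ω) : ℕ :=
  (taxiTrip t₀ X k ω).length

open Topology
open scoped ENNReal

/-!
The number of visits to `i` during trip `k + 2` is a function of the consecutive steps
`(X (k + 1), X (k + 2))`. Trips of even and of odd index use disjoint pairs of independent steps,
so the strong law of large numbers applies to each parity class separately, and the number of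
visits to `i` per trip converges almost surely to its mean. A shortest path from `s` to `t`
visits `i` outside its origin exactly once if it passes through `i` and `s ≠ i`, and never
otherwise; averaging over a uniform origin, destination and shortest path, this mean is
`N⁻² ∑_{s ≠ t, s ≠ i} σ_st(i) / σ_st`, i.e. `b_i'` up to a factor independent of `i`. Summing
over `i` gives the mean trip duration, and the density is the quotient of the two limits.
-/

theorem Fintype.card_mul_sum_comp_eval {ι : Type*} [DecidableEq ι] [Fintype ι] {γ : ι → Type*}
    [∀ i, Fintype (γ i)] {R : Type*} [CommSemiring R] (i₀ : ι) (g : γ i₀ → R) :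
    card (γ i₀) * ∑ τ : (∀ i, γ i), g (τ i₀) = card (∀ i, γ i) * ∑ c, g c := by
  rw [← (Equiv.piSplitAt i₀ γ).symm.sum_comp, Fintype.sum_prod_type,
    card_congr (Equiv.piSplitAt i₀ γ), card_prod]
  simp only [Equiv.piSplitAt_symm_apply, dif_pos, Finset.sum_const, Finset.card_univ,
    nsmul_eq_mul, Finset.mul_sum]
  push_cast
  exact Finset.sum_congr rfl fun _ _ => by ring

theorem Finset.sum_Icc_one_eq_sum_range {M : Type*} [AddCommMonoid M] (f : ℕ → M) (n : ℕ) :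
    ∑ k ∈ Icc 1 n, f k = ∑ k ∈ range n, f (k + 1) := by
  rw [← Ico_add_one_right_eq_Icc, sum_Ico_eq_sum_range, Nat.add_sub_cancel]
  simp only [add_comm]

theorem Filter.tendsto_of_tendsto_even_odd {α : Type*} {u : ℕ → α} {l : Filter α}
    (h₀ : Tendsto (fun M => u (2 * M)) atTop l) (h₁ : Tendsto (fun M => u (2 * M + 1)) atTop l) :
    Tendsto u atTop l := fun _ hs =>
  Eventually.atTop_of_arithmetic two_ne_zero fun k hk => by
    interval_cases k
    exacts [h₀ hs, h₁ hs]

section CesaroMeans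

variable {Y : ℕ → ℝ} {m : ℝ}

theorem tendsto_sum_range_div_of_tendsto_shift
    (h : Tendsto (fun n : ℕ => (∑ k ∈ range n, Y (k + 1)) / n) atTop (𝓝 m)) :
    Tendsto (fun n : ℕ => (∑ k ∈ range n, Y k) / n) atTop (𝓝 m) := by
  rw [← tendsto_add_atTop_iff_nat 1]
  have hlim := (tendsto_one_div_add_atTop_nhds_zero_nat.const_mul (Y 0)).add
    (h.mul (tendsto_natCast_div_add_atTop (1 : ℝ)))
  rw [mul_zero, zero_add, mul_one] at hlim
  refine hlim.congr' ?_
  filter_upwards [eventually_ne_atTop 0] with n hn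
  rw [sum_range_succ']
  push_cast
  field_simp
  ring

theorem tendsto_sum_range_div_of_even_odd
    (h₀ : Tendsto (fun M : ℕ => (∑ j ∈ range M, Y (2 * j)) / M) atTop (𝓝 m))
    (h₁ : Tendsto (fun M : ℕ => (∑ j ∈ range M, Y (2 * j + 1)) / M) atTop (𝓝 m)) :
    Tendsto (fun n : ℕ => (∑ k ∈ range n, Y k) / n) atTop (𝓝 m) := by
  have hsplit : ∀ M, ∑ k ∈ range (2 * M), Y k
      = ∑ j ∈ range M, Y (2 * j) + ∑ j ∈ range M, Y (2 * j + 1) := by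
    intro M
    induction M with
    | zero => simp
    | succ M ih =>
      rw [show 2 * (M + 1) = 2 * M + 1 + 1 by ring, sum_range_succ, sum_range_succ, ih,
        sum_range_succ, sum_range_succ]
      ring
  have hhalf : Tendsto (fun M : ℕ => (M : ℝ) / (2 * M + 1)) atTop (𝓝 (1 / 2)) := by
    have := (tendsto_natCast_div_add_atTop (1 / 2 : ℝ)).const_mul (1 / 2)
    rw [mul_one] at this
    refine this.congr fun M => ?_
    field_simp
  refine tendsto_of_tendsto_even_odd ?_ ?_
  · have := (h₀.add h₁).div_const 2
    rw [add_self_div_two] at this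
    refine this.congr fun M => ?_
    push_cast
    rw [hsplit]
    ring
  · have := (((tendsto_add_atTop_iff_nat 1).2 h₀).mul
      ((tendsto_const_nhds (x := (1 : ℝ))).sub hhalf)).add (h₁.mul hhalf)
    rw [show m * (1 - 1 / 2) + m * (1 / 2) = m by ring] at this
    refine this.congr' ?_
    filter_upwards [eventually_ne_atTop 0] with M hM
    rw [sum_range_succ Y, hsplit, sum_range_succ (fun j => Y (2 * j))]
    push_cast
    field_simp
    ring

end CesaroMeans

section Probability

variable {Ω S : Type*} [MeasurableSpace Ω] {μ : Measure Ω} [MeasurableSpace S]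

theorem identDistrib_of_measure_preimage_singleton [Countable S] [MeasurableSingletonClass S]
    {X Y : Ω → S} (hX : Measurable X) (hY : Measurable Y)
    (h : ∀ x, μ (X ⁻¹' {x}) = μ (Y ⁻¹' {x})) : IdentDistrib X Y μ μ where
  aemeasurable_fst := hX.aemeasurable
  aemeasurable_snd := hY.aemeasurable
  map_eq := Measure.ext_of_singleton fun x => by
    rw [Measure.map_apply hX (measurableSet_singleton x),
      Measure.map_apply hY (measurableSet_singleton x), h]

theorem integral_comp_prodMk_of_uniform [IsProbabilityMeasure μ] [Fintype S]
    [MeasurableSingletonClass S] {X Y : Ω → S} (hX : Measurable X) (hY : Measurable Y)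
    (hXY : IndepFun X Y μ) (hXu : ∀ x, μ (X ⁻¹' {x}) = (Fintype.card S : ℝ≥0∞)⁻¹)
    (hYu : ∀ y, μ (Y ⁻¹' {y}) = (Fintype.card S : ℝ≥0∞)⁻¹) (f : S × S → ℝ) :
    μ[fun ω => f (X ω, Y ω)] = (∑ q, f q) / Fintype.card S ^ 2 := by
  have hlaw : ∀ q : S × S,
      (μ.map fun ω => (X ω, Y ω)).real {q} = ((Fintype.card S : ℝ) ^ 2)⁻¹ := by
    rintro ⟨x, y⟩
    rw [measureReal_def, Measure.map_apply (hX.prodMk hY) (measurableSet_singleton _),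
      ← Set.singleton_prod_singleton, Set.mk_preimage_prod,
      hXY.measure_inter_preimage_eq_mul _ _ (measurableSet_singleton x) (measurableSet_singleton y),
      hXu, hYu, ENNReal.toReal_mul, ENNReal.toReal_inv, ENNReal.toReal_natCast, sq, mul_inv]
  rw [← integral_map (hX.prodMk hY).aemeasurable (measurable_of_countable f).aestronglyMeasurable,
    integral_fintype .of_finite]
  simp only [hlaw, smul_eq_mul, ← mul_sum]
  ring

theorem strong_law_ae_consecutive {X : ℕ → Ω → S} (hmeas : ∀ k, Measurable (X k))
    (hindep : iIndepFun X μ) (hident : ∀ k, IdentDistrib (X k) (X 0) μ μ) {f : S × S → ℝ}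
    (hf : Measurable f) (hint : Integrable (fun ω => f (X 0 ω, X 1 ω)) μ) :
    ∀ᵐ ω ∂μ, Tendsto (fun n : ℕ => (∑ k ∈ range n, f (X k ω, X (k + 1) ω)) / n) atTop
      (𝓝 μ[fun ω => f (X 0 ω, X 1 ω)]) := by
  have := hindep.isProbabilityMeasure
  have hblock : ∀ c, ∀ᵐ ω ∂μ, Tendsto
      (fun M : ℕ => (∑ j ∈ range M, f (X (2 * j + c) ω, X (2 * j + c + 1) ω)) / M) atTop
      (𝓝 μ[fun ω => f (X 0 ω, X 1 ω)]) := by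
    intro c
    have hpair : ∀ j, IdentDistrib (fun ω => f (X (2 * j + c) ω, X (2 * j + c + 1) ω))
        (fun ω => f (X 0 ω, X 1 ω)) μ μ := fun j =>
      ((hident _).prodMk ((hident _).trans (hident 1).symm) (hindep.indepFun (by omega))
        (hindep.indepFun zero_ne_one)).comp hf
    have hslln := strong_law_ae_real (fun j ω => f (X (2 * j + c) ω, X (2 * j + c + 1) ω))
      ((hpair 0).integrable_iff.2 hint)
      (fun j k hjk => (hindep.indepFun_prodMk_prodMk hmeas _ _ _ _
        (by omega) (by omega) (by omega) (by omega)).comp hf hf)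
      (fun j => (hpair j).trans (hpair 0).symm)
    rwa [(hpair 0).integral_eq] at hslln
  filter_upwards [hblock 0, hblock 1] with ω h₀ h₁
  exact tendsto_sum_range_div_of_even_odd h₀ h₁

end Probability

section ShortestPaths

variable {V : Type*} [Fintype V] [DecidableEq V] (G : SimpleGraph V) [DecidableRel G.Adj]

abbrev PathTable : Type _ := ∀ s t : V, ↥(G.finsetWalkLength (G.dist s t) s t)

noncomputable def adjBetweennessSum (i : V) : ℝ :=
  ∑ s : V, ∑ t : V, if s ≠ t ∧ s ≠ i then (numSPthrough G i s t : ℝ) / (numSP G s t : ℝ) else 0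

variable {G}

theorem numSP_pos (hconn : G.Connected) (s t : V) : 0 < numSP G s t := by
  obtain ⟨w, hw⟩ := hconn.exists_walk_length_eq_dist s t
  exact card_pos.2 ⟨w, mem_finsetWalkLength_iff.2 hw⟩

theorem nonempty_pathTable (hconn : G.Connected) : Nonempty (PathTable G) :=
  ⟨fun s t => ⟨_, mem_finsetWalkLength_iff.2 (hconn.exists_walk_length_eq_dist s t).choose_spec⟩⟩

variable (G) in
theorem numSPthrough_target (s t : V) : numSPthrough G t s t = numSP G s t := by
  rw [numSPthrough, numSP, filter_true_of_mem fun w _ => w.end_mem_support]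

variable (G) in
theorem sum_count_support_tail_shortestPaths (i s t : V) :
    ∑ w ∈ G.finsetWalkLength (G.dist s t) s t, w.support.tail.count i
      = if s ≠ t ∧ s ≠ i then numSPthrough G i s t else 0 := by
  have hcount : ∀ w ∈ G.finsetWalkLength (G.dist s t) s t,
      w.support.tail.count i = if i ∈ w.support.tail then 1 else 0 := fun w hw =>
    List.Nodup.count ((w.isPath_of_length_eq_dist
      (mem_finsetWalkLength_iff.1 hw)).support_nodup.sublist w.support.tail_sublist)
  rw [sum_congr rfl hcount, sum_boole, Nat.cast_id]
  split_ifs with h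
  · rw [numSPthrough]
    congr 1
    refine filter_congr fun w _ => ?_
    rw [w.mem_support_iff, or_iff_right (Ne.symm h.2)]
  · refine card_eq_zero.2 (filter_eq_empty_iff.2 fun w hw hi => ?_)
    have hpath := w.isPath_of_length_eq_dist (mem_finsetWalkLength_iff.1 hw)
    rcases not_and_or.1 h with hst | hsi
    · obtain rfl := not_not.1 hst
      have hnil : w.length = 0 := by simpa using mem_finsetWalkLength_iff.1 hw
      simp [List.length_eq_zero_iff.1 (by rw [List.length_tail, w.length_support, hnil] :
        w.support.tail.length = 0)] at hi
    · obtain rfl := not_not.1 hsi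
      exact (List.nodup_cons.1 (w.cons_tail_support ▸ hpath.support_nodup)).1 hi

theorem numSP_mul_sum_pathTable (hconn : G.Connected) (s t : V) (g : G.Walk s t → ℝ) :
    numSP G s t * ∑ τ : PathTable G, g (τ s t)
      = Fintype.card (PathTable G) * ∑ w ∈ G.finsetWalkLength (G.dist s t) s t, g w := by
  have hrow := Fintype.card_mul_sum_comp_eval (R := ℝ)
    (γ := fun s' => ∀ t' : V, ↥(G.finsetWalkLength (G.dist s' t') s' t')) s (fun ρ => g (ρ t))
  have hentry := Fintype.card_mul_sum_comp_eval (R := ℝ)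
    (γ := fun t' => ↥(G.finsetWalkLength (G.dist s t') s t')) t (fun p => g p)
  rw [Fintype.card_coe, sum_coe_sort _ (fun w => g w)] at hentry
  have hrow_ne : (Fintype.card (∀ t' : V, ↥(G.finsetWalkLength (G.dist s t') s t')) : ℝ) ≠ 0 :=
    Nat.cast_ne_zero.2 (@Fintype.card_ne_zero _ _ ((nonempty_pathTable hconn).map (· s)))
  refine mul_left_cancel₀ hrow_ne ?_
  rw [numSP]
  linear_combination (#(G.finsetWalkLength (G.dist s t) s t) : ℝ) * hrow
    + (Fintype.card (PathTable G) : ℝ) * hentry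

end ShortestPaths

section Betweenness

variable {V : Type*} [Fintype V] [DecidableEq V] {G : SimpleGraph V} [DecidableRel G.Adj]

variable (G) in
def tripVisits (i : V) (q : TaxiStep G × TaxiStep G) : ℕ :=
  (q.2.2 q.1.1 q.2.1).val.support.tail.count i

theorem sum_pathTable_count_support_tail (hconn : G.Connected) (i s t : V) :
    ∑ τ : PathTable G, ((τ s t).val.support.tail.count i : ℝ)
      = Fintype.card (PathTable G) *
        if s ≠ t ∧ s ≠ i then (numSPthrough G i s t : ℝ) / (numSP G s t : ℝ) else 0 := by
  have h := numSP_mul_sum_pathTable hconn s t (fun w => (w.support.tail.count i : ℝ))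
  rw [← Nat.cast_sum (s := G.finsetWalkLength _ s t), sum_count_support_tail_shortestPaths] at h
  have hσ : (numSP G s t : ℝ) ≠ 0 := Nat.cast_ne_zero.2 (numSP_pos hconn s t).ne'
  split_ifs at h ⊢
  · field_simp
    linear_combination h
  · simpa [hσ] using h

theorem sum_tripVisits_div_card_sq (hconn : G.Connected) (i : V) :
    (∑ q, (tripVisits G i q : ℝ)) / Fintype.card (TaxiStep G) ^ 2
      = adjBetweennessSum G i / Fintype.card V ^ 2 := by
  have hsum : ∑ q, (tripVisits G i q : ℝ)
      = Fintype.card (PathTable G) ^ 2 * adjBetweennessSum G i := by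
    simp only [Fintype.sum_prod_type, tripVisits, sum_pathTable_count_support_tail hconn,
      ← mul_sum, sum_const, card_univ, nsmul_eq_mul, adjBetweennessSum]
    ring
  have hT : (Fintype.card (PathTable G) : ℝ) ≠ 0 :=
    Nat.cast_ne_zero.2 (@Fintype.card_ne_zero _ _ (nonempty_pathTable hconn))
  rw [hsum, Fintype.card_prod]
  push_cast
  field_simp

theorem adjBetweenness_div_sum (hN : 3 ≤ Fintype.card V) (i : V) :
    adjBetweenness G i / ∑ j, adjBetweenness G j
      = adjBetweennessSum G i / ∑ j, adjBetweennessSum G j := by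
  have hN' : (3 : ℝ) ≤ Fintype.card V := by exact_mod_cast hN
  have hc : 1 / (((Fintype.card V : ℝ) - 1) * ((Fintype.card V : ℝ) - 2)) ≠ 0 := by
    apply one_div_ne_zero
    apply mul_ne_zero <;> linarith
  simp only [adjBetweenness, ← mul_sum]
  exact mul_div_mul_left _ _ hc

theorem sum_adjBetweennessSum_pos (hconn : G.Connected) (hN : 2 ≤ Fintype.card V) :
    0 < ∑ j, adjBetweennessSum G j := by
  obtain ⟨s, t, hst⟩ := Fintype.exists_pair_of_one_lt_card hN
  have hterm : ∀ i s' t' : V,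
      0 ≤ if s' ≠ t' ∧ s' ≠ i then (numSPthrough G i s' t' : ℝ) / numSP G s' t' else 0 := by
    intros; positivity
  have hσ : (numSP G s t : ℝ) ≠ 0 := Nat.cast_ne_zero.2 (numSP_pos hconn s t).ne'
  calc (0 : ℝ) < 1 := one_pos
    _ = if s ≠ t ∧ s ≠ t then (numSPthrough G t s t : ℝ) / numSP G s t else 0 := by
      rw [if_pos ⟨hst, hst⟩, numSPthrough_target, div_self hσ]
    _ ≤ ∑ t', if s ≠ t' ∧ s ≠ t then (numSPthrough G t s t' : ℝ) / numSP G s t' else 0 :=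
      single_le_sum (fun t' _ => hterm t s t') (mem_univ t)
    _ ≤ adjBetweennessSum G t :=
      single_le_sum (f := fun s' => ∑ t', _) (fun s' _ => sum_nonneg fun t' _ => hterm t s' t')
        (mem_univ s)
    _ ≤ ∑ j, adjBetweennessSum G j :=
      single_le_sum (fun j _ => sum_nonneg fun s' _ => sum_nonneg fun t' _ => hterm j s' t')
        (mem_univ t)

end Betweenness

section Taxi

variable {V : Type*} [Fintype V] [DecidableEq V] {G : SimpleGraph V} [DecidableRel G.Adj]
  {Ω : Type*} (t₀ : V) (X : ℕ → Ω → TaxiStep G)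

theorem taxiVisits_add_two (i : V) (k : ℕ) (ω : Ω) :
    taxiVisits t₀ X i (k + 2) ω = tripVisits G i (X (k + 1) ω, X (k + 2) ω) :=
  rfl

theorem sum_taxiVisits (k : ℕ) (ω : Ω) :
    ∑ i, taxiVisits t₀ X i k ω = taxiTripTime t₀ X k ω := by
  simpa [taxiVisits, taxiTripTime] using Multiset.sum_count_eq_card (s := univ)
    (m := ((taxiTrip t₀ X k ω).support.tail : Multiset V)) fun a _ => mem_univ a

theorem tendsto_sum_taxiTripTime_div {ω : Ω} {a : V → ℝ}
    (h : ∀ i, Tendsto (fun n : ℕ => (∑ k ∈ Icc 1 n, (taxiVisits t₀ X i k ω : ℝ)) / n)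
      atTop (𝓝 (a i))) :
    Tendsto (fun n : ℕ => (∑ k ∈ Icc 1 n, (taxiTripTime t₀ X k ω : ℝ)) / n)
      atTop (𝓝 (∑ i, a i)) := by
  have hsplit : ∀ n : ℕ, (∑ k ∈ Icc 1 n, (taxiTripTime t₀ X k ω : ℝ)) / n
      = ∑ i, (∑ k ∈ Icc 1 n, (taxiVisits t₀ X i k ω : ℝ)) / n := fun n => by
    simp only [← sum_taxiVisits t₀ X, Nat.cast_sum, ← sum_div]
    rw [sum_comm]
  simpa only [hsplit] using tendsto_finsetSum _ fun i _ => h i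

theorem ae_tendsto_sum_taxiVisits_div [MeasurableSpace Ω] {μ : Measure Ω} [IsProbabilityMeasure μ]
    [MeasurableSpace (TaxiStep G)] [MeasurableSingletonClass (TaxiStep G)]
    (hconn : G.Connected) (hmeas : ∀ k, Measurable (X k)) (hindep : iIndepFun X μ)
    (hunif : ∀ k, 1 ≤ k → ∀ x : TaxiStep G,
      μ {ω | X k ω = x} = (Fintype.card (TaxiStep G) : ℝ≥0∞)⁻¹) (i : V) :
    ∀ᵐ ω ∂μ, Tendsto (fun n : ℕ => (∑ k ∈ Icc 1 n, (taxiVisits t₀ X i k ω : ℝ)) / n)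
      atTop (𝓝 (adjBetweennessSum G i / Fintype.card V ^ 2)) := by
  have hmean : μ[fun ω => (tripVisits G i (X 1 ω, X 2 ω) : ℝ)]
      = adjBetweennessSum G i / Fintype.card V ^ 2 := by
    rw [integral_comp_prodMk_of_uniform (hmeas 1) (hmeas 2) (hindep.indepFun (by norm_num))
      (hunif 1 le_rfl) (hunif 2 one_le_two) fun q => (tripVisits G i q : ℝ),
      sum_tripVisits_div_card_sq hconn]
  have hslln := strong_law_ae_consecutive (X := fun k => X (k + 1)) (fun k => hmeas _)
    (hindep.precomp (add_left_injective 1))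
    (fun k => identDistrib_of_measure_preimage_singleton (hmeas _) (hmeas _)
      fun x => (hunif _ (by omega) x).trans (hunif 1 le_rfl x).symm)
    (measurable_of_countable fun q => (tripVisits G i q : ℝ))
    ((Integrable.of_finite (μ := μ.map fun ω => (X 1 ω, X 2 ω))
      (f := fun q => (tripVisits G i q : ℝ))).comp_measurable ((hmeas 1).prodMk (hmeas 2)))
  filter_upwards [hslln] with ω h
  rw [hmean] at h
  simp only [← taxiVisits_add_two t₀] at h
  simpa only [sum_Icc_one_eq_sum_range] using tendsto_sum_range_div_of_tendsto_shift
    (Y := fun k => (taxiVisits t₀ X i (k + 1) ω : ℝ)) h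

end Taxi

/-- Let `G` be a finite connected simple graph on `N ≥ 3` vertices and consider
the taxi drive on `G` with uniformly random destinations (`β = 0`): starting from a fixed vertex
`t₀`, the destinations `t_1, t_2, …` are i.i.d. uniform on `V`, and trip `k` traverses an
independently and uniformly chosen shortest path from `t_{k-1}` to `t_k`, spending one time unit
on each vertex of that path except its origin.  (This is modelled by i.i.d. steps
`X 1, X 2, … : Ω → TaxiStep G`, each uniform on the finite type `TaxiStep G`; uniformity on the
product means exactly that the destination is uniform and the shortest-path choices are uniform
and independent of everything else.)  Then almost surely, for every vertex `i`, the fraction of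
time units spent at `i` during the first `n` trips converges, as `n → ∞`, to
`b_i' / Σ_j b_j'`: the stationary density of the taxi drive is the normalized adjusted
betweenness. -/
theorem taxi_drive_stationary_density {V : Type*} [Fintype V] [DecidableEq V]
    (G : SimpleGraph V) [DecidableRel G.Adj] (hconn : G.Connected)
    (hN : 3 ≤ Fintype.card V) (t₀ : V)
    {Ω : Type*} [mΩ : MeasurableSpace Ω] (μ : Measure Ω) [IsProbabilityMeasure μ]
    (X : ℕ → Ω → TaxiStep G)
    (hmeas : ∀ k, @Measurable Ω (TaxiStep G) mΩ ⊤ (X k))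
    (hindep : iIndepFun (m := fun _ : ℕ => (⊤ : MeasurableSpace (TaxiStep G))) X μ)
    (hunif : ∀ k, 1 ≤ k → ∀ x : TaxiStep G,
      μ {ω | X k ω = x} = (Fintype.card (TaxiStep G) : ENNReal)⁻¹) :
    ∀ᵐ ω ∂μ, ∀ i : V,
      Tendsto
        (fun n : ℕ =>
          (∑ k ∈ Finset.Icc 1 n, (taxiVisits t₀ X i k ω : ℝ)) /
            ∑ k ∈ Finset.Icc 1 n, (taxiTripTime t₀ X k ω : ℝ))
        atTop (nhds (adjBetweenness G i / ∑ j : V, adjBetweenness G j)) := by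
  let _ : MeasurableSpace (TaxiStep G) := ⊤
  have : MeasurableSingletonClass (TaxiStep G) := ⟨fun _ => MeasurableSpace.measurableSet_top⟩
  filter_upwards [ae_all_iff.2 (ae_tendsto_sum_taxiVisits_div t₀ X hconn hmeas hindep hunif)]
    with ω hvisits i
  have hN2 : (Fintype.card V : ℝ) ^ 2 ≠ 0 := by positivity
  have htime_pos : ∑ j, adjBetweennessSum G j / Fintype.card V ^ 2 ≠ 0 := by
    rw [← sum_div]
    exact div_ne_zero (sum_adjBetweennessSum_pos hconn (by omega)).ne' hN2
  rw [adjBetweenness_div_sum hN, ← div_div_div_cancel_right₀ hN2, sum_div]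
  refine ((hvisits i).div (tendsto_sum_taxiTripTime_div t₀ X hvisits) htime_pos).congr' ?_
  filter_upwards [eventually_ne_atTop 0] with n hn
  exact div_div_div_cancel_right₀ (Nat.cast_ne_zero.2 hn) _ _
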